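/- Let S be a stacked 2-sphere and let T be a stacked 2-sphere obtained from S by a single edge flip. Let V_S (resp. V_T) be the set of nodes of degree four in the dual tree Λ(S̄) (resp. Λ(T̄)). Then the induced subgraphs Λ(S̄)[V_S] and Λ(T̄)[V_T] are isomorphic graphs. -/
import Mathlib


namespace PachnerSpheres

open Finset

/-- A triangulated 2-sphere on the vertex set `Fin n`, given by its set of
triangles: a pure 2-dimensional complex in which every edge lies in exactly two
triangles, all vertex links are connected (hence cycles), the complex is
connected, and the Euler characteristic is 2. -/
structure Sphere2 (n : ℕ) where
  faces : Finset (Finset (Fin n))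
  card_three : ∀ t ∈ faces, t.card = 3
  covers : ∀ v : Fin n, ∃ t ∈ faces, v ∈ t
  edge_two : ∀ t ∈ faces, ∀ e ⊆ t, e.card = 2 →
    (faces.filter fun t' => e ⊆ t').card = 2
  link_conn : ∀ v a b : Fin n,
    (∃ t ∈ faces, v ∈ t ∧ a ∈ t ∧ a ≠ v) →
    (∃ t ∈ faces, v ∈ t ∧ b ∈ t ∧ b ≠ v) →
    Relation.ReflTransGen
      (fun x y : Fin n => x ≠ y ∧ ({v, x, y} : Finset (Fin n)) ∈ faces) a b
  conn : ∀ a b : Fin n,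
    Relation.ReflTransGen
      (fun x y : Fin n => x ≠ y ∧ ∃ t ∈ faces, x ∈ t ∧ y ∈ t) a b
  euler : n + faces.card = (faces.biUnion fun t => t.powersetCard 2).card + 2

variable {n : ℕ}

namespace Sphere2

/-- The edges of a triangulated 2-sphere. -/
def edges (S : Sphere2 n) : Finset (Finset (Fin n)) :=
  S.faces.biUnion fun t => t.powersetCard 2

/-- `u` and `v` are joined by an edge of `S`. -/
def HasEdge (S : Sphere2 n) (u v : Fin n) : Prop :=
  u ≠ v ∧ ({u, v} : Finset (Fin n)) ∈ S.edges

instance (S : Sphere2 n) : DecidableRel S.HasEdge := fun u v =>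
  decidable_of_iff (u ≠ v ∧ ({u, v} : Finset (Fin n)) ∈ S.edges) Iff.rfl

/-- The degree of a vertex: the number of edges containing it. -/
def degree (S : Sphere2 n) (v : Fin n) : ℕ :=
  (S.edges.filter fun e => v ∈ e).card

/-- Combinatorial isomorphism of triangulated 2-spheres. -/
def Iso (S T : Sphere2 n) : Prop :=
  ∃ σ : Equiv.Perm (Fin n), T.faces = S.faces.image (Finset.image σ)

end Sphere2

/-- The face set obtained from `F` by the edge flip `ab ↦ cd`. -/
def flipFaces (F : Finset (Finset (Fin n))) (a b c d : Fin n) :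
    Finset (Finset (Fin n)) :=
  (F \ {{a, b, c}, {a, b, d}}) ∪ {{a, c, d}, {b, c, d}}

/-- `IsFlipOf S T a b c d` : `T` is obtained from `S` by the (admissible)
edge flip `ab ↦ cd`. -/
def IsFlipOf (S T : Sphere2 n) (a b c d : Fin n) : Prop :=
  c ≠ d ∧ ({a, b, c} : Finset (Fin n)) ∈ S.faces ∧
    ({a, b, d} : Finset (Fin n)) ∈ S.faces ∧ ¬ S.HasEdge c d ∧
    T.faces = flipFaces S.faces a b c d

/-- `T` is obtained from `S` by a single edge flip. -/
def Flip (S T : Sphere2 n) : Prop := ∃ a b c d : Fin n, IsFlipOf S T a b c d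

/-- A flag 2-sphere: distinct from the boundary of the tetrahedron (which is the
only triangulated 2-sphere with at most 4 vertices) and every 3-cycle of the
edge graph bounds a triangle. -/
def IsFlag (S : Sphere2 n) : Prop :=
  4 < n ∧ ∀ a b c : Fin n, S.HasEdge a b → S.HasEdge b c → S.HasEdge a c →
    ({a, b, c} : Finset (Fin n)) ∈ S.faces

/-- `S` is (isomorphic to) the double cone `Γ_n`: there are two non-adjacent
vertices such that every triangle contains one of them. -/
def IsDoubleCone (S : Sphere2 n) : Prop :=
  ∃ v w : Fin n, v ≠ w ∧ ¬ S.HasEdge v w ∧ ∀ t ∈ S.faces, v ∈ t ∨ w ∈ t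

/-- One step in the Pachner graph of `n`-vertex flag 2-spheres: an edge flip
between flag 2-spheres (in either direction), or a combinatorial isomorphism
(nodes are isomorphism classes). -/
def FlagStep (S T : Sphere2 n) : Prop :=
  IsFlag S ∧ IsFlag T ∧ (Flip S T ∨ Flip T S ∨ Sphere2.Iso S T)

/-- `S ∼ T` : `S` and `T` are connected in the Pachner graph of `n`-vertex flag
2-spheres, i.e. joined by a sequence of edge flips all whose intermediate
triangulations are `n`-vertex flag 2-spheres. -/
def FlagConn (S T : Sphere2 n) : Prop := Relation.ReflTransGen FlagStep S T

/-! ### Quadrilaterals in triangulated 2-spheres -/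

/-- The boundary edges of a subcomplex `Q` (given by a set of triangles):
the edges lying in exactly one triangle of `Q`. -/
def bdryEdges (Q : Finset (Finset (Fin n))) : Finset (Finset (Fin n)) :=
  (Q.biUnion fun t => t.powersetCard 2).filter fun e =>
    (Q.filter fun t => e ⊆ t).card = 1

/-- The edge set of the 4-cycle `a-b-c-d-a`. -/
def quadCycle (a b c d : Fin n) : Finset (Finset (Fin n)) :=
  {{a, b}, {b, c}, {c, d}, {d, a}}

/-- `Q` is a quadrilateral in `T` with boundary 4-cycle `a-b-c-d-a`: a
subcomplex of `T` which is a triangulated disc whose boundary is the 4-cycle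
`a-b-c-d-a` (connected, with boundary edges exactly the 4-cycle). -/
def IsQuad (T : Sphere2 n) (Q : Finset (Finset (Fin n))) (a b c d : Fin n) :
    Prop :=
  Q ⊆ T.faces ∧ Q.Nonempty ∧ [a, b, c, d].Pairwise (· ≠ ·) ∧
  bdryEdges Q = quadCycle a b c d ∧
  ∀ s ∈ Q, ∀ t ∈ Q,
    Relation.ReflTransGen
      (fun x y : Finset (Fin n) => x ∈ Q ∧ y ∈ Q ∧ (x ∩ y).card = 2) s t

/-- The interior vertices of a quadrilateral with boundary vertices
`a, b, c, d`. -/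
def quadInterior (Q : Finset (Finset (Fin n))) (a b c d : Fin n) :
    Finset (Fin n) :=
  Q.biUnion id \ {a, b, c, d}

/-- An ordered quadrilateral: it has interior vertices, and all interior
vertices have degree four (in the ambient sphere). -/
def IsOrderedQuad (T : Sphere2 n) (Q : Finset (Finset (Fin n)))
    (a b c d : Fin n) : Prop :=
  IsQuad T Q a b c d ∧ (quadInterior Q a b c d).Nonempty ∧
    ∀ v ∈ quadInterior Q a b c d, T.degree v = 4

/-- A proper quadrilateral: its boundary 4-cycle `a-b-c-d-a` is induced in `T`
and all four boundary vertices have degree at least five. -/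
def IsProperQuad (T : Sphere2 n) (Q : Finset (Finset (Fin n)))
    (a b c d : Fin n) : Prop :=
  IsQuad T Q a b c d ∧ ¬ T.HasEdge a c ∧ ¬ T.HasEdge b d ∧
    5 ≤ T.degree a ∧ 5 ≤ T.degree b ∧ 5 ≤ T.degree c ∧ 5 ≤ T.degree d

/-- The diagonal path of the ordered quadrilateral `Q` has an endpoint at the
boundary vertex `v`: exactly one interior vertex of `Q` is adjacent to `v`. -/
def DiagEndAt (T : Sphere2 n) (Q : Finset (Finset (Fin n))) (a b c d : Fin n)
    (v : Fin n) : Prop :=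
  v ∈ ({a, b, c, d} : Finset (Fin n)) ∧
    ∃! u : Fin n, u ∈ quadInterior Q a b c d ∧ T.HasEdge v u

/-! ### Stacked 3-balls and stacked 2-spheres -/

/-- A stacked 3-ball, given by its set of tetrahedra: obtained from a single
tetrahedron by repeatedly gluing a new tetrahedron (with a fresh apex) onto a
boundary triangle. -/
inductive IsStackedBall : Finset (Finset (Fin n)) → Prop
  | single (t : Finset (Fin n)) (ht : t.card = 4) : IsStackedBall {t}
  | glue (B : Finset (Finset (Fin n))) (t : Finset (Fin n)) (x : Fin n)
      (hB : IsStackedBall B) (ht : t.card = 3)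
      (hbd : (B.filter fun τ => t ⊆ τ).card = 1)
      (hx : ∀ τ ∈ B, x ∉ τ) :
      IsStackedBall (insert (insert x t) B)

/-- The boundary triangles of a complex `B` given by a set of tetrahedra:
the triangles lying in exactly one tetrahedron of `B`. -/
def bdry (B : Finset (Finset (Fin n))) : Finset (Finset (Fin n)) :=
  (B.biUnion fun τ => τ.powersetCard 3).filter fun s =>
    (B.filter fun τ => s ⊆ τ).card = 1

/-- A stacked 2-sphere: a triangulated 2-sphere which is the boundary of a
stacked 3-ball. -/
def IsStacked (S : Sphere2 n) : Prop :=
  ∃ B : Finset (Finset (Fin n)), IsStackedBall B ∧ S.faces = bdry B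

/-- The degree of the node `σ` in the dual graph `Λ(B)` of `B`: the number of
tetrahedra of `B` sharing a triangle with `σ`. -/
def dualDeg (B : Finset (Finset (Fin n))) (σ : Finset (Fin n)) : ℕ :=
  (B.filter fun τ => τ ≠ σ ∧ (τ ∩ σ).card = 3).card

/-- One step in the Pachner graph `𝓢_n` of `n`-vertex stacked 2-spheres. -/
def StackedStep (S T : Sphere2 n) : Prop :=
  IsStacked S ∧ IsStacked T ∧ (Flip S T ∨ Flip T S ∨ Sphere2.Iso S T)

/-- Connectivity in the Pachner graph `𝓢_n` of `n`-vertex stacked 2-spheres. -/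
def StackedConn (S T : Sphere2 n) : Prop := Relation.ReflTransGen StackedStep S T

/-- One step in the dual graph `Λ(B)` with the node `σ` deleted. -/
def DualStepAvoiding (B : Finset (Finset (Fin n))) (σ : Finset (Fin n))
    (x y : Finset (Fin n)) : Prop :=
  x ∈ B ∧ y ∈ B ∧ x ≠ σ ∧ y ≠ σ ∧ x ≠ y ∧ (x ∩ y).card = 3

/-- Reachability in the dual graph `Λ(B)` with the node `σ` deleted. -/
def DualReachAvoiding (B : Finset (Finset (Fin n))) (σ x y : Finset (Fin n)) :
    Prop :=
  Relation.ReflTransGen (DualStepAvoiding B σ) x y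

/-- One step (adjacency) in the dual graph `Λ(B)`. -/
def DualStep (B : Finset (Finset (Fin n))) (x y : Finset (Fin n)) : Prop :=
  x ∈ B ∧ y ∈ B ∧ x ≠ y ∧ (x ∩ y).card = 3

/-- The dual graph `Λ(B)` is a path: connected, all degrees at most two, and
some node of degree at most one. -/
def DualIsPath (B : Finset (Finset (Fin n))) : Prop :=
  (∀ σ ∈ B, dualDeg B σ ≤ 2) ∧
  (∀ σ ∈ B, ∀ τ ∈ B, Relation.ReflTransGen (DualStep B) σ τ) ∧
  (∃ σ ∈ B, dualDeg B σ ≤ 1)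

/-- `S` belongs to `𝓢ₙ⁰`: `S` is a stacked 2-sphere whose (unique) stacked
3-ball has a dual graph with no node of degree four. -/
def NoDeg4 (S : Sphere2 n) : Prop :=
  IsStacked S ∧ ∀ B : Finset (Finset (Fin n)), IsStackedBall B →
    S.faces = bdry B → ∀ σ ∈ B, dualDeg B σ ≠ 4

/-- One step in the Pachner graph `𝓢ₙ⁰`. -/
def Step0 (S T : Sphere2 n) : Prop :=
  NoDeg4 S ∧ NoDeg4 T ∧ (Flip S T ∨ Flip T S ∨ Sphere2.Iso S T)

/-- Reachability between vertices in the subcomplex of `B` induced on the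
vertices outside `t`. -/
def inducedReach (B : Finset (Finset (Fin n))) (t : Finset (Fin n))
    (x y : Fin n) : Prop :=
  Relation.ReflTransGen
    (fun u v : Fin n => u ≠ v ∧ u ∉ t ∧ v ∉ t ∧ ∃ τ ∈ B, u ∈ τ ∧ v ∈ τ) x y

/-- The tetrahedra of the clique complex of the edge graph of `S`:
all 4-cliques of the edge graph. -/
def cliqueTets (S : Sphere2 n) : Finset (Finset (Fin n)) :=
  (Finset.univ.powersetCard 4).filter fun τ =>
    ∀ u ∈ τ, ∀ v ∈ τ, u ≠ v → S.HasEdge u v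

/-! ### Trees with maximum node-degree four, and counting components -/

/-- Trees on `m` nodes with all node-degrees at most four. -/
abbrev DegLe4Tree (m : ℕ) : Type :=
  {G : SimpleGraph (Fin m) // G.IsTree ∧ ∀ v, (G.neighborSet v).ncard ≤ 4}

/-- Trees up to graph isomorphism. -/
def treeSetoid (m : ℕ) : Setoid (DegLe4Tree m) :=
  Relation.EqvGen.setoid fun G H => Nonempty (G.1 ≃g H.1)

/-- `t(m)`: the number of isomorphism classes of trees on `m` nodes with
maximum node-degree at most four. -/
noncomputable def numDeg4Trees (m : ℕ) : ℕ := Nat.card (Quotient (treeSetoid m))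

/-- Stacked 2-spheres modulo connectivity in the Pachner graph `𝓢_n`
(nodes of `𝓢_n` are isomorphism classes, arcs are edge flips). -/
def stackedSetoid (n : ℕ) : Setoid {S : Sphere2 n // IsStacked S} :=
  Relation.EqvGen.setoid fun S T => Flip S.1 T.1 ∨ Sphere2.Iso S.1 T.1

/-- The number of connected components of the Pachner graph `𝓢_n` of
`n`-vertex stacked 2-spheres. -/
noncomputable def numStackedComponents (n : ℕ) : ℕ := Nat.card (Quotient (stackedSetoid n))


/-! ### Auxiliary lemmas for Statement 12 -/

lemma mem_bdry {B : Finset (Finset (Fin n))} {s : Finset (Fin n)} :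
    s ∈ bdry B ↔ s.card = 3 ∧ (B.filter fun τ => s ⊆ τ).card = 1 := by
  constructor
  · rintro h
    rw [bdry, Finset.mem_filter, Finset.mem_biUnion] at h
    obtain ⟨⟨τ, hτ, hs⟩, h1⟩ := h
    rw [Finset.mem_powersetCard] at hs
    exact ⟨hs.2, h1⟩
  · rintro ⟨h3, h1⟩
    have hne : (B.filter fun τ => s ⊆ τ).Nonempty := by
      rw [← Finset.card_pos, h1]; norm_num
    obtain ⟨τ, hτ⟩ := hne
    rw [Finset.mem_filter] at hτ
    rw [bdry, Finset.mem_filter, Finset.mem_biUnion]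
    exact ⟨⟨τ, hτ.1, Finset.mem_powersetCard.2 ⟨hτ.2, h3⟩⟩, h1⟩

lemma cnt_insert {B : Finset (Finset (Fin n))} {ν : Finset (Fin n)} (hν : ν ∉ B)
    (s : Finset (Fin n)) :
    ((insert ν B).filter fun τ => s ⊆ τ).card
      = (B.filter fun τ => s ⊆ τ).card + if s ⊆ ν then 1 else 0 := by
  rw [Finset.filter_insert]
  split_ifs with h
  · rw [Finset.card_insert_of_notMem (fun hmem => hν (Finset.mem_of_mem_filter _ hmem))]
  · rfl

lemma glue_facts {B : Finset (Finset (Fin n))} {t : Finset (Fin n)} {x : Fin n}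
    (ht : t.card = 3) (hbd : (B.filter fun τ => t ⊆ τ).card = 1)
    (hx : ∀ τ ∈ B, x ∉ τ) :
    x ∉ t ∧ insert x t ∉ B ∧ (insert x t).card = 4 ∧ t ∈ bdry B := by
  obtain ⟨τ', hτ'⟩ := Finset.card_eq_one.mp hbd
  have hτ'mem : τ' ∈ B.filter fun τ => t ⊆ τ := by rw [hτ']; exact Finset.mem_singleton_self _
  rw [Finset.mem_filter] at hτ'mem
  have hxt : x ∉ t := fun hxt => hx τ' hτ'mem.1 (hτ'mem.2 hxt)
  refine ⟨hxt, fun hmem => hx _ hmem (Finset.mem_insert_self _ _), ?_, mem_bdry.2 ⟨ht, hbd⟩⟩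
  rw [Finset.card_insert_of_notMem hxt, ht]

lemma ball_card4 {B : Finset (Finset (Fin n))} (hB : IsStackedBall B) :
    ∀ τ ∈ B, τ.card = 4 := by
  induction hB with
  | single t ht =>
    intro τ hτ
    rw [Finset.mem_singleton] at hτ; subst hτ; exact ht
  | glue B t x hB ht hbd hx ih =>
    intro τ hτ
    obtain ⟨hxt, hνB, hν4, htb⟩ := glue_facts ht hbd hx
    rcases Finset.mem_insert.mp hτ with rfl | hτ
    · exact hν4
    · exact ih τ hτ

lemma ball_triCount {B : Finset (Finset (Fin n))} (hB : IsStackedBall B) :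
    ∀ s : Finset (Fin n), s.card = 3 → (B.filter fun τ => s ⊆ τ).card ≤ 2 := by
  induction hB with
  | single t ht =>
    intro s _
    calc (({t} : Finset (Finset (Fin n))).filter fun τ => s ⊆ τ).card
        ≤ ({t} : Finset (Finset (Fin n))).card := Finset.card_filter_le _ _
      _ ≤ 2 := by simp
  | glue B t x hB ht hbd hx ih =>
    intro s hs
    obtain ⟨hxt, hνB, hν4, htb⟩ := glue_facts ht hbd hx
    rw [cnt_insert hνB]
    split_ifs with hsν
    · by_cases hxs : x ∈ s
      · have : B.filter (fun τ => s ⊆ τ) = ∅ := by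
          apply Finset.filter_eq_empty_iff.2
          intro τ hτ hsub
          exact hx τ hτ (hsub hxs)
        rw [this]; simp
      · have hst : s ⊆ t := by
          intro u hu
          rcases Finset.mem_insert.mp (hsν hu) with rfl | h
          · exact absurd hu hxs
          · exact h
        have : s = t := Finset.eq_of_subset_of_card_le hst (by omega)
        subst this
        omega
    · have := ih s hs; omega

lemma mem_bdry_insert {B : Finset (Finset (Fin n))} {t : Finset (Fin n)} {x : Fin n}
    (ht : t.card = 3) (hbd : (B.filter fun τ => t ⊆ τ).card = 1)
    (hx : ∀ τ ∈ B, x ∉ τ) (s : Finset (Fin n)) :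
    s ∈ bdry (insert (insert x t) B) ↔
      (s ∈ bdry B ∧ s ≠ t) ∨ (s.card = 3 ∧ s ⊆ insert x t ∧ x ∈ s) := by
  obtain ⟨hxt, hνB, hν4, htb⟩ := glue_facts ht hbd hx
  rw [mem_bdry, mem_bdry, cnt_insert hνB]
  by_cases hsν : s ⊆ insert x t
  · rw [if_pos hsν]
    by_cases hxs : x ∈ s
    · have h0 : B.filter (fun τ => s ⊆ τ) = ∅ := by
        apply Finset.filter_eq_empty_iff.2
        intro τ hτ hsub
        exact hx τ hτ (hsub hxs)
      rw [h0]
      simp only [Finset.card_empty]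
      constructor
      · rintro ⟨h3, _⟩; exact Or.inr ⟨h3, hsν, hxs⟩
      · rintro (⟨⟨_, h1⟩, _⟩ | ⟨h3, _, _⟩)
        · omega
        · exact ⟨h3, by simp⟩
    · have hst : s ⊆ t := by
        intro u hu
        rcases Finset.mem_insert.mp (hsν hu) with rfl | h
        · exact absurd hu hxs
        · exact h
      constructor
      · rintro ⟨h3, h1⟩
        have : s = t := Finset.eq_of_subset_of_card_le hst (by omega)
        subst this
        omega
      · rintro (⟨⟨h3, h1⟩, hne⟩ | ⟨h3, _, hxs'⟩)
        · exact absurd (Finset.eq_of_subset_of_card_le hst (by omega)) hne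
        · exact absurd hxs' hxs
  · rw [if_neg hsν]
    simp only [Nat.add_zero]
    constructor
    · rintro ⟨h3, h1⟩
      refine Or.inl ⟨⟨h3, h1⟩, ?_⟩
      rintro rfl
      exact hsν (Finset.subset_insert _ _)
    · rintro (⟨⟨h3, h1⟩, _⟩ | ⟨_, hsub, _⟩)
      · exact ⟨h3, h1⟩
      · exact absurd hsub hsν

lemma exists_third {A : Finset (Fin n)} (hA : 3 ≤ A.card) (u v : Fin n) :
    ∃ w ∈ A, w ≠ u ∧ w ≠ v := by
  have h1 : A.card - 1 ≤ (A.erase u).card := Finset.pred_card_le_card_erase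
  have h2 : (A.erase u).card - 1 ≤ ((A.erase u).erase v).card := Finset.pred_card_le_card_erase
  have : ((A.erase u).erase v).Nonempty := by
    rw [← Finset.card_pos]; omega
  obtain ⟨w, hw⟩ := this
  rw [Finset.mem_erase, Finset.mem_erase] at hw
  exact ⟨w, hw.2.2, hw.2.1, hw.1⟩

lemma ball_pairEdge {B : Finset (Finset (Fin n))} (hB : IsStackedBall B) :
    ∀ τ ∈ B, ∀ u ∈ τ, ∀ v ∈ τ, u ≠ v → ∃ s ∈ bdry B, u ∈ s ∧ v ∈ s := by
  induction hB with
  | single t ht =>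
    intro τ hτ u hu v hv huv
    rw [Finset.mem_singleton] at hτ; subst hτ
    obtain ⟨w, hwt, hwu, hwv⟩ := exists_third (A := τ) (by omega) u v
    refine ⟨τ.erase w, ?_, Finset.mem_erase.2 ⟨fun h => hwu h.symm, hu⟩,
      Finset.mem_erase.2 ⟨fun h => hwv h.symm, hv⟩⟩
    rw [mem_bdry]
    constructor
    · rw [Finset.card_erase_of_mem hwt]; omega
    · rw [Finset.filter_singleton, if_pos (Finset.erase_subset _ _)]
      simp
  | glue B t x hB ht hbd hx ih =>
    intro τ hτ u hu v hv huv
    obtain ⟨hxt, hνB, hν4, htb⟩ := glue_facts ht hbd hx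
    rcases Finset.mem_insert.mp hτ with rfl | hτ
    · -- τ = insert x t
      obtain ⟨w, hwt, hwu, hwv⟩ := exists_third (A := t) (le_of_eq ht.symm) u v
      refine ⟨(insert x t).erase w, ?_, Finset.mem_erase.2 ⟨fun h => hwu h.symm, hu⟩,
        Finset.mem_erase.2 ⟨fun h => hwv h.symm, hv⟩⟩
      rw [mem_bdry_insert ht hbd hx]
      refine Or.inr ⟨?_, Finset.erase_subset _ _, ?_⟩
      · rw [Finset.card_erase_of_mem (Finset.mem_insert_of_mem hwt)]; omega
      · exact Finset.mem_erase.2 ⟨fun h => hxt (h ▸ hwt), Finset.mem_insert_self _ _⟩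
    · obtain ⟨s, hs, hus, hvs⟩ := ih τ hτ u hu v hv huv
      by_cases hst : s = t
      · subst hst
        obtain ⟨w, hwt, hwu, hwv⟩ := exists_third (A := s) (le_of_eq ht.symm) u v
        refine ⟨insert x (s.erase w), ?_, Finset.mem_insert_of_mem
            (Finset.mem_erase.2 ⟨fun h => hwu h.symm, hus⟩),
          Finset.mem_insert_of_mem (Finset.mem_erase.2 ⟨fun h => hwv h.symm, hvs⟩)⟩
        rw [mem_bdry_insert ht hbd hx]
        refine Or.inr ⟨?_, ?_, Finset.mem_insert_self _ _⟩
        · have hxe : x ∉ s.erase w := fun h => hxt (Finset.mem_of_mem_erase h)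
          rw [Finset.card_insert_of_notMem hxe, Finset.card_erase_of_mem hwt]
          have := mem_bdry.mp hs
          omega
        · intro y hy
          rcases Finset.mem_insert.mp hy with rfl | hy
          · exact Finset.mem_insert_self _ _
          · exact Finset.mem_insert_of_mem (Finset.mem_of_mem_erase hy)
      · exact ⟨s, (mem_bdry_insert ht hbd hx s).2 (Or.inl ⟨hs, hst⟩), hus, hvs⟩

lemma ball_clique {B : Finset (Finset (Fin n))} (hB : IsStackedBall B) :
    ∀ τ : Finset (Fin n), τ.card = 4 →
      (∀ u ∈ τ, ∀ v ∈ τ, u ≠ v → ∃ s ∈ bdry B, u ∈ s ∧ v ∈ s) → τ ∈ B := by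
  induction hB with
  | single t ht =>
    intro τ hτ4 hpairs
    have hsub : τ ⊆ t := by
      intro u hu
      have : (τ.erase u).Nonempty := by
        rw [← Finset.card_pos, Finset.card_erase_of_mem hu]; omega
      obtain ⟨v, hv⟩ := this
      rw [Finset.mem_erase] at hv
      obtain ⟨s, hs, hus, _⟩ := hpairs u hu v hv.2 (fun h => hv.1 h.symm)
      rw [mem_bdry] at hs
      obtain ⟨h3, h1⟩ := hs
      rw [Finset.filter_singleton] at h1
      split_ifs at h1 with hst
      · exact hst hus
      · simp at h1
    rw [Finset.mem_singleton]
    exact Finset.eq_of_subset_of_card_le hsub (by omega)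
  | glue B t x hB ht hbd hx ih =>
    intro τ hτ4 hpairs
    obtain ⟨hxt, hνB, hν4, htb⟩ := glue_facts ht hbd hx
    by_cases hxτ : x ∈ τ
    · have hsub : τ ⊆ insert x t := by
        intro u hu
        by_cases hux : u = x
        · subst hux; exact Finset.mem_insert_self _ _
        · obtain ⟨s, hs, hxs, hus⟩ := hpairs x hxτ u hu (fun h => hux h.symm)
          rw [mem_bdry_insert ht hbd hx] at hs
          rcases hs with ⟨hs, _⟩ | ⟨_, hsν, _⟩
          · exfalso
            obtain ⟨_, h1⟩ := mem_bdry.mp hs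
            have hne : (B.filter fun τ' => s ⊆ τ').Nonempty := by
              rw [← Finset.card_pos, h1]; norm_num
            obtain ⟨τ', hτ'⟩ := hne
            rw [Finset.mem_filter] at hτ'
            exact hx τ' hτ'.1 (hτ'.2 hxs)
          · exact hsν hus
      exact Finset.mem_insert.2 (Or.inl (Finset.eq_of_subset_of_card_le hsub (by omega)))
    · refine Finset.mem_insert_of_mem (ih τ hτ4 ?_)
      intro u hu v hv huv
      obtain ⟨s, hs, hus, hvs⟩ := hpairs u hu v hv huv
      rw [mem_bdry_insert ht hbd hx] at hs
      rcases hs with ⟨hs, _⟩ | ⟨h3, hsν, hxs⟩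
      · exact ⟨s, hs, hus, hvs⟩
      · refine ⟨t, htb, ?_, ?_⟩
        · rcases Finset.mem_insert.mp (hsν hus) with rfl | h
          · exact absurd hu hxτ
          · exact h
        · rcases Finset.mem_insert.mp (hsν hvs) with rfl | h
          · exact absurd hv hxτ
          · exact h

lemma ball_acyc {B : Finset (Finset (Fin n))} (hB : IsStackedBall B) :
    ∀ C ⊆ B, C.Nonempty →
      ∃ ρ ∈ C, (C.filter fun μ => μ ≠ ρ ∧ (μ ∩ ρ).card = 3).card ≤ 1 := by
  induction hB with
  | single t ht =>
    intro C hC hne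
    rcases Finset.subset_singleton_iff.mp hC with rfl | rfl
    · exact absurd rfl (Finset.nonempty_iff_ne_empty.mp hne)
    · refine ⟨t, Finset.mem_singleton_self _, ?_⟩
      rw [Finset.filter_singleton, if_neg (fun h => h.1 rfl)]
      simp
  | glue B t x hB ht hbd hx ih =>
    intro C hC hne
    obtain ⟨hxt, hνB, hν4, htb⟩ := glue_facts ht hbd hx
    obtain ⟨τ', hτ'eq⟩ := Finset.card_eq_one.mp hbd
    have hτ'mem : τ' ∈ B.filter fun τ => t ⊆ τ := by
      rw [hτ'eq]; exact Finset.mem_singleton_self _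
    by_cases hνC : insert x t ∈ C
    · refine ⟨insert x t, hνC, ?_⟩
      have hsub : (C.filter fun μ => μ ≠ insert x t ∧ (μ ∩ insert x t).card = 3) ⊆ {τ'} := by
        intro μ hμ
        rw [Finset.mem_filter] at hμ
        obtain ⟨hμC, hμne, hμ3⟩ := hμ
        have hμB : μ ∈ B := by
          rcases Finset.mem_insert.mp (hC hμC) with h | h
          · exact absurd h hμne
          · exact h
        have hsubt : μ ∩ insert x t ⊆ t := by
          intro y hy
          rw [Finset.mem_inter] at hy
          rcases Finset.mem_insert.mp hy.2 with rfl | h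
          · exact absurd hy.1 (hx μ hμB)
          · exact h
        have heq : μ ∩ insert x t = t := Finset.eq_of_subset_of_card_le hsubt (by omega)
        have : t ⊆ μ := by
          rw [← heq]; exact Finset.inter_subset_left
        have : μ ∈ B.filter fun τ => t ⊆ τ := Finset.mem_filter.2 ⟨hμB, this⟩
        rw [hτ'eq] at this
        exact this
      calc (C.filter fun μ => μ ≠ insert x t ∧ (μ ∩ insert x t).card = 3).card
          ≤ ({τ'} : Finset (Finset (Fin n))).card := Finset.card_le_card hsub
        _ = 1 := Finset.card_singleton _
    · refine ih C ?_ hne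
      intro μ hμ
      rcases Finset.mem_insert.mp (hC hμ) with rfl | h
      · exact absurd hμ hνC
      · exact h

lemma second_container {B : Finset (Finset (Fin n))} (hB : IsStackedBall B)
    {f ρ : Finset (Fin n)} (hf3 : f.card = 3) (hρ : ρ ∈ B) (hfρ : f ⊆ ρ)
    (hnb : f ∉ bdry B) : ∃ ν ∈ B, ν ≠ ρ ∧ f ⊆ ν := by
  have h1 : ρ ∈ B.filter fun τ => f ⊆ τ := Finset.mem_filter.2 ⟨hρ, hfρ⟩
  have hne1 : (B.filter fun τ => f ⊆ τ).card ≠ 1 := fun h => hnb (mem_bdry.2 ⟨hf3, h⟩)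
  have hle : (B.filter fun τ => f ⊆ τ).card ≤ 2 := ball_triCount hB f hf3
  have hge : 1 ≤ (B.filter fun τ => f ⊆ τ).card := Finset.card_pos.2 ⟨ρ, h1⟩
  have h2 : (B.filter fun τ => f ⊆ τ).card = 2 := by omega
  obtain ⟨u, v, huv, heq⟩ := Finset.card_eq_two.mp h2
  have hρm : ρ ∈ ({u, v} : Finset (Finset (Fin n))) := heq ▸ h1
  rcases Finset.mem_insert.mp hρm with rfl | hρm
  · have hvm : v ∈ B.filter fun τ => f ⊆ τ := by rw [heq]; simp
    rw [Finset.mem_filter] at hvm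
    exact ⟨v, hvm.1, fun h => huv h.symm, hvm.2⟩
  · rw [Finset.mem_singleton] at hρm; subst hρm
    have hum : u ∈ B.filter fun τ => f ⊆ τ := by rw [heq]; simp
    rw [Finset.mem_filter] at hum
    exact ⟨u, hum.1, huv, hum.2⟩

lemma three_containers {B : Finset (Finset (Fin n))} (hB : IsStackedBall B)
    {f : Finset (Fin n)} (hf3 : f.card = 3) {ρ1 ρ2 ρ3 : Finset (Fin n)}
    (h1 : ρ1 ∈ B) (hs1 : f ⊆ ρ1) (h2 : ρ2 ∈ B) (hs2 : f ⊆ ρ2)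
    (h3 : ρ3 ∈ B) (hs3 : f ⊆ ρ3)
    (h12 : ρ1 ≠ ρ2) (h13 : ρ1 ≠ ρ3) (h23 : ρ2 ≠ ρ3) : False := by
  have hsub : ({ρ1, ρ2, ρ3} : Finset (Finset (Fin n))) ⊆ B.filter fun τ => f ⊆ τ := by
    intro μ hμ
    rcases Finset.mem_insert.mp hμ with rfl | hμ
    · exact Finset.mem_filter.2 ⟨h1, hs1⟩
    rcases Finset.mem_insert.mp hμ with rfl | hμ
    · exact Finset.mem_filter.2 ⟨h2, hs2⟩
    rw [Finset.mem_singleton] at hμ; subst hμ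
    exact Finset.mem_filter.2 ⟨h3, hs3⟩
  have hcard : ({ρ1, ρ2, ρ3} : Finset (Finset (Fin n))).card = 3 := by
    rw [Finset.card_insert_of_notMem (by simp [h12, h13]),
      Finset.card_insert_of_notMem (by simp [h23]), Finset.card_singleton]
  have hA := Finset.card_le_card hsub
  have hC := ball_triCount hB f hf3
  omega

lemma inter_card_three {ρ1 ρ2 g : Finset (Fin n)} (hc1 : ρ1.card = 4) (hc2 : ρ2.card = 4)
    (hne : ρ1 ≠ ρ2) (hg3 : g.card = 3) (hg1 : g ⊆ ρ1) (hg2 : g ⊆ ρ2) :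
    (ρ1 ∩ ρ2).card = 3 := by
  have hsub : g ⊆ ρ1 ∩ ρ2 := Finset.subset_inter hg1 hg2
  have hle3 : 3 ≤ (ρ1 ∩ ρ2).card := hg3 ▸ Finset.card_le_card hsub
  have hle : (ρ1 ∩ ρ2).card ≤ 4 :=
    le_trans (Finset.card_le_card Finset.inter_subset_left) (le_of_eq hc1)
  by_cases h4 : (ρ1 ∩ ρ2).card = 4
  · have heq : ρ1 ∩ ρ2 = ρ1 :=
      Finset.eq_of_subset_of_card_le Finset.inter_subset_left (by omega)
    have hsub12 : ρ1 ⊆ ρ2 := by rw [← heq]; exact Finset.inter_subset_right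
    exact absurd (Finset.eq_of_subset_of_card_le hsub12 (by omega)) hne
  · omega

lemma dualDeg_eq {B : Finset (Finset (Fin n))} (hB : IsStackedBall B)
    {σ : Finset (Fin n)} (hσ : σ ∈ B) :
    dualDeg B σ = ((σ.powersetCard 3).filter fun f => f ∉ bdry B).card := by
  rw [dualDeg]
  apply Finset.card_bij (fun τ _ => τ ∩ σ)
  · intro τ hτ
    rw [Finset.mem_filter] at hτ
    obtain ⟨hτB, hne, h3⟩ := hτ
    rw [Finset.mem_filter, Finset.mem_powersetCard]
    refine ⟨⟨Finset.inter_subset_right, h3⟩, ?_⟩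
    intro hb
    rw [mem_bdry] at hb
    have hsubp : ({τ, σ} : Finset (Finset (Fin n))) ⊆ B.filter fun μ => τ ∩ σ ⊆ μ := by
      intro μ hμ
      rcases Finset.mem_insert.mp hμ with rfl | hμ
      · exact Finset.mem_filter.2 ⟨hτB, Finset.inter_subset_left⟩
      · rw [Finset.mem_singleton] at hμ; subst hμ
        exact Finset.mem_filter.2 ⟨hσ, Finset.inter_subset_right⟩
    have hc2 : ({τ, σ} : Finset (Finset (Fin n))).card = 2 := by
      rw [Finset.card_insert_of_notMem (by simp [hne]), Finset.card_singleton]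
    have := Finset.card_le_card hsubp
    omega
  · intro τ1 h1 τ2 h2 heq
    rw [Finset.mem_filter] at h1 h2
    by_contra hne12
    exact three_containers hB h1.2.2 hσ Finset.inter_subset_right h1.1
      Finset.inter_subset_left h2.1 (by rw [heq]; exact Finset.inter_subset_left)
      (Ne.symm h1.2.1) (Ne.symm h2.2.1) hne12
  · intro f hf
    rw [Finset.mem_filter, Finset.mem_powersetCard] at hf
    obtain ⟨⟨hfσ, hf3⟩, hnb⟩ := hf
    obtain ⟨ν, hνB, hνσ, hfν⟩ := second_container hB hf3 hσ hfσ hnb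
    have hi3 : (ν ∩ σ).card = 3 :=
      inter_card_three (ball_card4 hB ν hνB) (ball_card4 hB σ hσ) hνσ hf3 hfν hfσ
    refine ⟨ν, Finset.mem_filter.2 ⟨hνB, hνσ, hi3⟩, ?_⟩
    exact (Finset.eq_of_subset_of_card_le (Finset.subset_inter hfν hfσ) (by omega)).symm

lemma deg4_iff {B : Finset (Finset (Fin n))} (hB : IsStackedBall B)
    {σ : Finset (Fin n)} (hσ : σ ∈ B) :
    dualDeg B σ = 4 ↔ ∀ f ⊆ σ, f.card = 3 → f ∉ bdry B := by
  rw [dualDeg_eq hB hσ]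
  have hσ4 := ball_card4 hB σ hσ
  have hpc : (σ.powersetCard 3).card = 4 := by
    rw [Finset.card_powersetCard, hσ4]; rfl
  have hfle := Finset.card_filter_le (σ.powersetCard 3) (fun f => f ∉ bdry B)
  constructor
  · intro h f hfσ hf3 hfb
    have heq : (σ.powersetCard 3).filter (fun f => f ∉ bdry B) = σ.powersetCard 3 :=
      Finset.eq_of_subset_of_card_le (Finset.filter_subset _ _) (by omega)
    have hmem : f ∈ (σ.powersetCard 3).filter fun f => f ∉ bdry B := by
      rw [heq, Finset.mem_powersetCard]; exact ⟨hfσ, hf3⟩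
    rw [Finset.mem_filter] at hmem
    exact hmem.2 hfb
  · intro h
    have heq : (σ.powersetCard 3).filter (fun f => f ∉ bdry B) = σ.powersetCard 3 := by
      apply Finset.filter_true_of_mem
      intro f hf
      rw [Finset.mem_powersetCard] at hf
      exact h f hf.1 hf.2
    rw [heq, hpc]


lemma card2_of {a b : Fin n} (hab : a ≠ b) : ({a, b} : Finset (Fin n)).card = 2 := by
  rw [Finset.card_insert_of_notMem (by simp [hab]), Finset.card_singleton]

lemma card3_of {a b c : Fin n} (hab : a ≠ b) (hac : a ≠ c) (hbc : b ≠ c) :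
    ({a, b, c} : Finset (Fin n)).card = 3 := by
  rw [Finset.card_insert_of_notMem (by simp [hab, hac]),
    Finset.card_insert_of_notMem (by simp [hbc]), Finset.card_singleton]

lemma card4_of {a b c d : Fin n} (hab : a ≠ b) (hac : a ≠ c) (had : a ≠ d)
    (hbc : b ≠ c) (hbd : b ≠ d) (hcd : c ≠ d) :
    ({a, b, c, d} : Finset (Fin n)).card = 4 := by
  rw [Finset.card_insert_of_notMem (by simp [hab, hac, had]),
    Finset.card_insert_of_notMem (by simp [hbc, hbd]),
    Finset.card_insert_of_notMem (by simp [hcd]), Finset.card_singleton]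

lemma card3_ne {a b c : Fin n} (h : ({a, b, c} : Finset (Fin n)).card = 3) :
    a ≠ b ∧ a ≠ c ∧ b ≠ c := by
  refine ⟨?_, ?_, ?_⟩ <;> rintro rfl
  · have hsub : ({a, a, c} : Finset (Fin n)) ⊆ {a, c} := by
      intro y hy; simp at hy ⊢; tauto
    have h1 := Finset.card_le_card hsub
    have h2 : ({a, c} : Finset (Fin n)).card ≤ 2 :=
      le_trans (Finset.card_insert_le _ _) (by simp)
    omega
  · have hsub : ({a, b, a} : Finset (Fin n)) ⊆ {a, b} := by
      intro y hy; simp at hy ⊢; tauto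
    have h1 := Finset.card_le_card hsub
    have h2 : ({a, b} : Finset (Fin n)).card ≤ 2 :=
      le_trans (Finset.card_insert_le _ _) (by simp)
    omega
  · have hsub : ({a, b, b} : Finset (Fin n)) ⊆ {a, b} := by
      intro y hy; simp at hy ⊢; tauto
    have h1 := Finset.card_le_card hsub
    have h2 : ({a, b} : Finset (Fin n)).card ≤ 2 :=
      le_trans (Finset.card_insert_le _ _) (by simp)
    omega

lemma flip_mem_faces {S T : Sphere2 n} {a b c d : Fin n}
    (hTf : T.faces = flipFaces S.faces a b c d) :
    ∀ f : Finset (Fin n), f ∈ T.faces ↔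
      (f ∈ S.faces ∧ f ≠ {a, b, c} ∧ f ≠ {a, b, d}) ∨ f = {a, c, d} ∨ f = {b, c, d} := by
  intro f
  rw [hTf]
  simp only [flipFaces, Finset.mem_union, Finset.mem_sdiff, Finset.mem_insert,
    Finset.mem_singleton]
  tauto

lemma ab_faces {S : Sphere2 n} {a b c d : Fin n}
    (habc : ({a, b, c} : Finset (Fin n)) ∈ S.faces)
    (habd : ({a, b, d} : Finset (Fin n)) ∈ S.faces) (hcd : c ≠ d) :
    ∀ f ∈ S.faces, a ∈ f → b ∈ f → f = {a, b, c} ∨ f = {a, b, d} := by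
  obtain ⟨hab, hac, hbc⟩ := card3_ne (S.card_three _ habc)
  obtain ⟨-, had, hbd⟩ := card3_ne (S.card_three _ habd)
  intro f hfS haf hbf
  have h2 := S.edge_two {a, b, c} habc {a, b} (by intro y hy; simp at hy ⊢; tauto)
    (card2_of hab)
  have habcd : ({a, b, c} : Finset (Fin n)) ≠ {a, b, d} := by
    intro h
    have hcmem : c ∈ ({a, b, d} : Finset (Fin n)) := by rw [← h]; simp
    simp at hcmem
    rcases hcmem with h' | h' | h'
    exacts [hac h'.symm, hbc h'.symm, hcd h']
  have hsubp : ({({a, b, c} : Finset (Fin n)), {a, b, d}} : Finset (Finset (Fin n)))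
      ⊆ S.faces.filter fun t' => ({a, b} : Finset (Fin n)) ⊆ t' := by
    intro μ hμ
    rcases Finset.mem_insert.mp hμ with rfl | hμ
    · exact Finset.mem_filter.2 ⟨habc, by intro y hy; simp at hy ⊢; tauto⟩
    · rw [Finset.mem_singleton] at hμ; subst hμ
      exact Finset.mem_filter.2 ⟨habd, by intro y hy; simp at hy ⊢; tauto⟩
  have heq : ({({a, b, c} : Finset (Fin n)), {a, b, d}} : Finset (Finset (Fin n)))
      = S.faces.filter fun t' => ({a, b} : Finset (Fin n)) ⊆ t' := by
    apply Finset.eq_of_subset_of_card_le hsubp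
    rw [h2, Finset.card_insert_of_notMem (by simp [habcd]), Finset.card_singleton]
  have hmem : f ∈ S.faces.filter fun t' => ({a, b} : Finset (Fin n)) ⊆ t' := by
    refine Finset.mem_filter.2 ⟨hfS, ?_⟩
    intro y hy
    simp at hy
    rcases hy with rfl | rfl
    · exact haf
    · exact hbf
  rw [← heq] at hmem
  simpa using hmem

set_option maxHeartbeats 2000000 in
lemma main_side (S T : Sphere2 n) (a b c d : Fin n) (hf : IsFlipOf S T a b c d)
    (B B' : Finset (Finset (Fin n)))
    (hB : IsStackedBall B) (hbS : S.faces = bdry B)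
    (hB' : IsStackedBall B') (hbT : T.faces = bdry B') :
    ∀ σ ∈ B, dualDeg B σ = 4 → σ ∈ B' ∧ dualDeg B' σ = 4 := by
  obtain ⟨hcd, habc, habd, hnedge, hTf⟩ := hf
  obtain ⟨hab, hac, hbc⟩ := card3_ne (S.card_three _ habc)
  obtain ⟨-, had, hbd⟩ := card3_ne (S.card_three _ habd)
  have hTmem := flip_mem_faces hTf
  have habfaces := ab_faces habc habd hcd
  have habc_b : ({a, b, c} : Finset (Fin n)) ∈ bdry B := by rw [← hbS]; exact habc
  have habd_b : ({a, b, d} : Finset (Fin n)) ∈ bdry B := by rw [← hbS]; exact habd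
  obtain ⟨h3abc, h1abc⟩ := mem_bdry.mp habc_b
  obtain ⟨σ0, hσ0eq⟩ := Finset.card_eq_one.mp h1abc
  have hσ0mem : σ0 ∈ B.filter fun τ => ({a, b, c} : Finset (Fin n)) ⊆ τ := by
    rw [hσ0eq]; simp
  rw [Finset.mem_filter] at hσ0mem
  obtain ⟨hσ0B, hσ0sub⟩ := hσ0mem
  have hσ04 : σ0.card = 4 := ball_card4 hB σ0 hσ0B
  have hsd : (σ0 \ {a, b, c}).card = 1 := by
    rw [Finset.card_sdiff_of_subset hσ0sub, hσ04, h3abc]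
  obtain ⟨x, hxeq⟩ := Finset.card_eq_one.mp hsd
  have hxmem : x ∈ σ0 \ {a, b, c} := by rw [hxeq]; simp
  rw [Finset.mem_sdiff] at hxmem
  obtain ⟨hxσ0, hxabc⟩ := hxmem
  simp at hxabc
  obtain ⟨hxa, hxb, hxc⟩ := hxabc
  have haσ0 : a ∈ σ0 := hσ0sub (by simp)
  have hbσ0 : b ∈ σ0 := hσ0sub (by simp)
  have hcσ0 : c ∈ σ0 := hσ0sub (by simp)
  have hσ0eq4 : σ0 = {a, b, c, x} := by
    have hu := Finset.union_sdiff_of_subset hσ0sub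
    rw [hxeq] at hu
    rw [← hu]; ext y
    simp only [Finset.mem_union, Finset.mem_insert, Finset.mem_singleton]
    tauto
  have hnocd : ∀ ρ ∈ B, ¬(c ∈ ρ ∧ d ∈ ρ) := by
    rintro ρ hρ ⟨hcρ, hdρ⟩
    obtain ⟨s, hs, hcs, hds⟩ := ball_pairEdge hB ρ hρ c hcρ d hdρ hcd
    refine hnedge ⟨hcd, ?_⟩
    rw [Sphere2.edges, Finset.mem_biUnion]
    refine ⟨s, by rw [hbS]; exact hs, Finset.mem_powersetCard.2 ⟨?_, card2_of hcd⟩⟩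
    intro y hy; simp at hy; rcases hy with rfl | rfl; exacts [hcs, hds]
  have hxd_ne : x ≠ d := by
    intro h
    exact hnocd σ0 hσ0B ⟨hcσ0, h ▸ hxσ0⟩
  have hnoab' : ∀ ρ ∈ B', ¬(a ∈ ρ ∧ b ∈ ρ) := by
    rintro ρ hρ ⟨haρ, hbρ⟩
    obtain ⟨s, hs, has, hbs⟩ := ball_pairEdge hB' ρ hρ a haρ b hbρ hab
    have hsT : s ∈ T.faces := by rw [hbT]; exact hs
    rcases (hTmem s).mp hsT with ⟨hsS, hne1, hne2⟩ | rfl | rfl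
    · rcases habfaces s hsS has hbs with rfl | rfl
      · exact hne1 rfl
      · exact hne2 rfl
    · simp at hbs
      rcases hbs with h | h | h
      exacts [hab h.symm, hbc h, hbd h]
    · simp at has
      rcases has with h | h | h
      exacts [hab h, hac h, had h]
  have hBtoB' : ∀ ρ ∈ B, ¬(a ∈ ρ ∧ b ∈ ρ) → ρ ∈ B' := by
    intro ρ hρ hnab
    apply ball_clique hB' ρ (ball_card4 hB ρ hρ)
    intro u hu v hv huv
    obtain ⟨s, hs, hus, hvs⟩ := ball_pairEdge hB ρ hρ u hu v hv huv
    have hsS : s ∈ S.faces := by rw [hbS]; exact hs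
    have hacdT : ({a, c, d} : Finset (Fin n)) ∈ bdry B' := by
      rw [← hbT]; exact (hTmem _).mpr (Or.inr (Or.inl rfl))
    have hbcdT : ({b, c, d} : Finset (Fin n)) ∈ bdry B' := by
      rw [← hbT]; exact (hTmem _).mpr (Or.inr (Or.inr rfl))
    by_cases h1 : s = {a, b, c}
    · subst h1
      simp at hus hvs
      rcases hus with h | h | h <;> rcases hvs with h' | h' | h'
      · exact absurd (h.trans h'.symm) huv
      · exact absurd ⟨h ▸ hu, h' ▸ hv⟩ hnab
      · exact ⟨{a, c, d}, hacdT, by rw [h]; simp, by rw [h']; simp⟩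
      · exact absurd ⟨h' ▸ hv, h ▸ hu⟩ hnab
      · exact absurd (h.trans h'.symm) huv
      · exact ⟨{b, c, d}, hbcdT, by rw [h]; simp, by rw [h']; simp⟩
      · exact ⟨{a, c, d}, hacdT, by rw [h]; simp, by rw [h']; simp⟩
      · exact ⟨{b, c, d}, hbcdT, by rw [h]; simp, by rw [h']; simp⟩
      · exact absurd (h.trans h'.symm) huv
    by_cases h2 : s = {a, b, d}
    · subst h2
      simp at hus hvs
      rcases hus with h | h | h <;> rcases hvs with h' | h' | h'
      · exact absurd (h.trans h'.symm) huv
      · exact absurd ⟨h ▸ hu, h' ▸ hv⟩ hnab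
      · exact ⟨{a, c, d}, hacdT, by rw [h]; simp, by rw [h']; simp⟩
      · exact absurd ⟨h' ▸ hv, h ▸ hu⟩ hnab
      · exact absurd (h.trans h'.symm) huv
      · exact ⟨{b, c, d}, hbcdT, by rw [h]; simp, by rw [h']; simp⟩
      · exact ⟨{a, c, d}, hacdT, by rw [h]; simp, by rw [h']; simp⟩
      · exact ⟨{b, c, d}, hbcdT, by rw [h]; simp, by rw [h']; simp⟩
      · exact absurd (h.trans h'.symm) huv
    · exact ⟨s, by rw [← hbT]; exact (hTmem s).mpr (Or.inl ⟨hsS, h1, h2⟩), hus, hvs⟩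
  have hB'toB : ∀ ρ ∈ B', ¬(c ∈ ρ ∧ d ∈ ρ) → ρ ∈ B := by
    intro ρ hρ hncd
    apply ball_clique hB ρ (ball_card4 hB' ρ hρ)
    intro u hu v hv huv
    obtain ⟨s, hs, hus, hvs⟩ := ball_pairEdge hB' ρ hρ u hu v hv huv
    have hsT : s ∈ T.faces := by rw [hbT]; exact hs
    rcases (hTmem s).mp hsT with ⟨hsS, -, -⟩ | rfl | rfl
    · exact ⟨s, by rw [← hbS]; exact hsS, hus, hvs⟩
    · simp at hus hvs
      rcases hus with h | h | h <;> rcases hvs with h' | h' | h'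
      · exact absurd (h.trans h'.symm) huv
      · exact ⟨{a, b, c}, habc_b, by rw [h]; simp, by rw [h']; simp⟩
      · exact ⟨{a, b, d}, habd_b, by rw [h]; simp, by rw [h']; simp⟩
      · exact ⟨{a, b, c}, habc_b, by rw [h]; simp, by rw [h']; simp⟩
      · exact absurd (h.trans h'.symm) huv
      · exact absurd ⟨h ▸ hu, h' ▸ hv⟩ hncd
      · exact ⟨{a, b, d}, habd_b, by rw [h]; simp, by rw [h']; simp⟩
      · exact absurd ⟨h' ▸ hv, h ▸ hu⟩ hncd
      · exact absurd (h.trans h'.symm) huv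
    · simp at hus hvs
      rcases hus with h | h | h <;> rcases hvs with h' | h' | h'
      · exact absurd (h.trans h'.symm) huv
      · exact ⟨{a, b, c}, habc_b, by rw [h]; simp, by rw [h']; simp⟩
      · exact ⟨{a, b, d}, habd_b, by rw [h]; simp, by rw [h']; simp⟩
      · exact ⟨{a, b, c}, habc_b, by rw [h]; simp, by rw [h']; simp⟩
      · exact absurd (h.trans h'.symm) huv
      · exact absurd ⟨h ▸ hu, h' ▸ hv⟩ hncd
      · exact ⟨{a, b, d}, habd_b, by rw [h]; simp, by rw [h']; simp⟩
      · exact absurd ⟨h' ▸ hv, h ▸ hu⟩ hncd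
      · exact absurd (h.trans h'.symm) huv
  have hfinal : ∀ ρ ∈ B', d ∈ ρ → x ∈ ρ → ∃ s ∈ bdry B, x ∈ s ∧ d ∈ s := by
    intro ρ hρ hdρ hxρ
    obtain ⟨s, hs, hxs, hds⟩ := ball_pairEdge hB' ρ hρ x hxρ d hdρ hxd_ne
    have hsT : s ∈ T.faces := by rw [hbT]; exact hs
    rcases (hTmem s).mp hsT with ⟨hsS, -, -⟩ | rfl | rfl
    · exact ⟨s, by rw [← hbS]; exact hsS, hxs, hds⟩
    · simp at hxs
      rcases hxs with h | h | h
      exacts [absurd h hxa, absurd h hxc, absurd h hxd_ne]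
    · simp at hxs
      rcases hxs with h | h | h
      exacts [absurd h hxb, absurd h hxc, absurd h hxd_ne]
  have hf3acx : ({a, c, x} : Finset (Fin n)).card = 3 :=
    card3_of hac (Ne.symm hxa) (Ne.symm hxc)
  have hfσ0acx : ({a, c, x} : Finset (Fin n)) ⊆ σ0 := by
    intro y hy; simp at hy; rcases hy with rfl | rfl | rfl; exacts [haσ0, hcσ0, hxσ0]
  have hxd : ∃ s ∈ bdry B, x ∈ s ∧ d ∈ s := by
    by_cases hfb : ({a, c, x} : Finset (Fin n)) ∈ bdry B
    · have hfT : ({a, c, x} : Finset (Fin n)) ∈ bdry B' := by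
        rw [← hbT]
        apply (hTmem _).mpr
        refine Or.inl ⟨by rw [hbS]; exact hfb, ?_, ?_⟩
        · intro h
          have hbmem : b ∈ ({a, c, x} : Finset (Fin n)) := by rw [h]; simp
          simp at hbmem
          rcases hbmem with h' | h' | h'
          exacts [hab h'.symm, hbc h', hxb h'.symm]
        · intro h
          have hbmem : b ∈ ({a, c, x} : Finset (Fin n)) := by rw [h]; simp
          simp at hbmem
          rcases hbmem with h' | h' | h'
          exacts [hab h'.symm, hbc h', hxb h'.symm]
      obtain ⟨-, h1'⟩ := mem_bdry.mp hfT
      have hne' : (B'.filter fun τ => ({a, c, x} : Finset (Fin n)) ⊆ τ).Nonempty := by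
        rw [← Finset.card_pos, h1']; norm_num
      obtain ⟨ρ', hρ'⟩ := hne'
      rw [Finset.mem_filter] at hρ'
      obtain ⟨hρ'B', hfρ'⟩ := hρ'
      by_cases hcdρ' : c ∈ ρ' ∧ d ∈ ρ'
      · exact hfinal ρ' hρ'B' hcdρ'.2 (hfρ' (by simp))
      · have hρ'B : ρ' ∈ B := hB'toB ρ' hρ'B' hcdρ'
        have hρ'σ0 : ρ' ≠ σ0 := fun h =>
          hnoab' ρ' hρ'B' ⟨by rw [h]; exact haσ0, by rw [h]; exact hbσ0⟩
        obtain ⟨-, h1f⟩ := mem_bdry.mp hfb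
        have hsub2 : ({ρ', σ0} : Finset (Finset (Fin n)))
            ⊆ B.filter fun τ => ({a, c, x} : Finset (Fin n)) ⊆ τ := by
          intro μ hμ
          rcases Finset.mem_insert.mp hμ with rfl | hμ
          · exact Finset.mem_filter.2 ⟨hρ'B, hfρ'⟩
          · rw [Finset.mem_singleton] at hμ; subst hμ
            exact Finset.mem_filter.2 ⟨hσ0B, hfσ0acx⟩
        have hc2 : ({ρ', σ0} : Finset (Finset (Fin n))).card = 2 := by
          rw [Finset.card_insert_of_notMem (by simp [hρ'σ0]), Finset.card_singleton]
        have := Finset.card_le_card hsub2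
        omega
    · obtain ⟨ρ, hρB, hρne, hfρ⟩ := second_container hB hf3acx hσ0B hfσ0acx hfb
      have hbρ : b ∉ ρ := by
        intro hbρ
        apply hρne
        have hsub4 : ({a, b, c, x} : Finset (Fin n)) ⊆ ρ := by
          intro y hy; simp at hy
          rcases hy with rfl | rfl | rfl | rfl
          exacts [hfρ (by simp), hbρ, hfρ (by simp), hfρ (by simp)]
        have hc4' : ({a, b, c, x} : Finset (Fin n)).card = 4 :=
          card4_of hab hac (Ne.symm hxa) hbc (Ne.symm hxb) (Ne.symm hxc)
        have heq4 : ({a, b, c, x} : Finset (Fin n)) = ρ :=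
          Finset.eq_of_subset_of_card_le hsub4 (by rw [ball_card4 hB ρ hρB, hc4'])
        rw [← heq4, hσ0eq4]
      have hρB' : ρ ∈ B' := hBtoB' ρ hρB (fun h => hbρ h.2)
      have hfnT : ({a, c, x} : Finset (Fin n)) ∉ bdry B' := by
        intro hfT
        have hfT' : ({a, c, x} : Finset (Fin n)) ∈ T.faces := by rw [hbT]; exact hfT
        rcases (hTmem _).mp hfT' with ⟨hfS, -, -⟩ | h | h
        · exact hfb (by rw [← hbS]; exact hfS)
        · have hxm : x ∈ ({a, c, d} : Finset (Fin n)) := by rw [← h]; simp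
          simp at hxm
          rcases hxm with h' | h' | h'
          exacts [hxa h', hxc h', hxd_ne h']
        · have ham : a ∈ ({b, c, d} : Finset (Fin n)) := by rw [← h]; simp
          simp at ham
          rcases ham with h' | h' | h'
          exacts [hab h', hac h', had h']
      obtain ⟨ρ2, hρ2B', hρ2ne, hfρ2⟩ := second_container hB' hf3acx hρB' hfρ hfnT
      by_cases hcdρ2 : c ∈ ρ2 ∧ d ∈ ρ2
      · exact hfinal ρ2 hρ2B' hcdρ2.2 (hfρ2 (by simp))
      · have hρ2B : ρ2 ∈ B := hB'toB ρ2 hρ2B' hcdρ2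
        have hρ2σ0 : ρ2 ≠ σ0 := fun h =>
          hnoab' ρ2 hρ2B' ⟨by rw [h]; exact haσ0, by rw [h]; exact hbσ0⟩
        exact (three_containers hB hf3acx hσ0B hfσ0acx hρB hfρ hρ2B hfρ2
          (Ne.symm hρne) (Ne.symm hρ2σ0) (Ne.symm hρ2ne)).elim
  obtain ⟨sxd, hsxd, hxsxd, hdsxd⟩ := hxd
  obtain ⟨sax, hsax, h1ax, h2ax⟩ :=
    ball_pairEdge hB σ0 hσ0B a haσ0 x hxσ0 (Ne.symm hxa)
  obtain ⟨sbx, hsbx, h1bx, h2bx⟩ :=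
    ball_pairEdge hB σ0 hσ0B b hbσ0 x hxσ0 (Ne.symm hxb)
  have hτ04 : ({a, b, d, x} : Finset (Fin n)).card = 4 :=
    card4_of hab had (Ne.symm hxa) hbd (Ne.symm hxb) (fun h => hxd_ne h.symm)
  have hτ0B : ({a, b, d, x} : Finset (Fin n)) ∈ B := by
    apply ball_clique hB _ hτ04
    intro u hu v hv huv
    simp at hu hv
    rcases hu with h | h | h | h <;> rcases hv with h' | h' | h' | h'
    · exact absurd (h.trans h'.symm) huv
    · exact ⟨{a, b, c}, habc_b, by rw [h]; simp, by rw [h']; simp⟩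
    · exact ⟨{a, b, d}, habd_b, by rw [h]; simp, by rw [h']; simp⟩
    · exact ⟨sax, hsax, by rw [h]; exact h1ax, by rw [h']; exact h2ax⟩
    · exact ⟨{a, b, c}, habc_b, by rw [h]; simp, by rw [h']; simp⟩
    · exact absurd (h.trans h'.symm) huv
    · exact ⟨{a, b, d}, habd_b, by rw [h]; simp, by rw [h']; simp⟩
    · exact ⟨sbx, hsbx, by rw [h]; exact h1bx, by rw [h']; exact h2bx⟩
    · exact ⟨{a, b, d}, habd_b, by rw [h]; simp, by rw [h']; simp⟩
    · exact ⟨{a, b, d}, habd_b, by rw [h]; simp, by rw [h']; simp⟩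
    · exact absurd (h.trans h'.symm) huv
    · exact ⟨sxd, hsxd, by rw [h]; exact hdsxd, by rw [h']; exact hxsxd⟩
    · exact ⟨sax, hsax, by rw [h]; exact h2ax, by rw [h']; exact h1ax⟩
    · exact ⟨sbx, hsbx, by rw [h]; exact h2bx, by rw [h']; exact h1bx⟩
    · exact ⟨sxd, hsxd, by rw [h]; exact hxsxd, by rw [h']; exact hdsxd⟩
    · exact absurd (h.trans h'.symm) huv
  have hconAbd : B.filter (fun τ => ({a, b, d} : Finset (Fin n)) ⊆ τ)
      = {({a, b, d, x} : Finset (Fin n))} := by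
    obtain ⟨-, h1'⟩ := mem_bdry.mp habd_b
    obtain ⟨w, hw⟩ := Finset.card_eq_one.mp h1'
    have hmem : ({a, b, d, x} : Finset (Fin n))
        ∈ B.filter fun τ => ({a, b, d} : Finset (Fin n)) ⊆ τ :=
      Finset.mem_filter.2 ⟨hτ0B, by intro y hy; simp at hy ⊢; tauto⟩
    rw [hw] at hmem ⊢
    rw [Finset.mem_singleton] at hmem
    rw [hmem]
  have hσ0τ0ne : σ0 ≠ ({a, b, d, x} : Finset (Fin n)) := by
    intro h
    have hcm : c ∈ ({a, b, d, x} : Finset (Fin n)) := by rw [← h]; exact hcσ0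
    simp at hcm
    rcases hcm with h' | h' | h' | h'
    exacts [hac h'.symm, hbc h'.symm, hcd h', hxc h'.symm]
  have h3abx : ({a, b, x} : Finset (Fin n)).card = 3 :=
    card3_of hab (Ne.symm hxa) (Ne.symm hxb)
  have hconAbx : B.filter (fun τ => ({a, b, x} : Finset (Fin n)) ⊆ τ)
      = {σ0, ({a, b, d, x} : Finset (Fin n))} := by
    apply (Finset.eq_of_subset_of_card_le ?_ ?_).symm
    · intro μ hμ
      rcases Finset.mem_insert.mp hμ with rfl | hμ
      · refine Finset.mem_filter.2 ⟨hσ0B, ?_⟩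
        intro y hy; simp at hy; rcases hy with rfl | rfl | rfl
        exacts [haσ0, hbσ0, hxσ0]
      · rw [Finset.mem_singleton] at hμ; subst hμ
        exact Finset.mem_filter.2 ⟨hτ0B, by intro y hy; simp at hy ⊢; tauto⟩
    · rw [Finset.card_insert_of_notMem (by simp [hσ0τ0ne]), Finset.card_singleton]
      exact ball_triCount hB _ h3abx
  have habA : ∀ ρ ∈ B, a ∈ ρ → b ∈ ρ → ρ = σ0 ∨ ρ = ({a, b, d, x} : Finset (Fin n)) := by
    intro ρ0 hρ0 haρ0 hbρ0
    by_contra hcon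
    push_neg at hcon
    obtain ⟨hne1, hne2⟩ := hcon
    have hMne : (B.filter (fun ρ => a ∈ ρ ∧ b ∈ ρ ∧ ρ ≠ σ0 ∧
        ρ ≠ ({a, b, d, x} : Finset (Fin n)))).Nonempty :=
      ⟨ρ0, Finset.mem_filter.2 ⟨hρ0, haρ0, hbρ0, hne1, hne2⟩⟩
    obtain ⟨ρ, hρM, hle⟩ := ball_acyc hB _ (Finset.filter_subset _ _) hMne
    have hρM' := hρM
    rw [Finset.mem_filter] at hρM'
    obtain ⟨hρB, haρ, hbρ, hρσ0, hρτ0⟩ := hρM'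
    have habsub : ({a, b} : Finset (Fin n)) ⊆ ρ := by
      intro y hy; simp at hy; rcases hy with rfl | rfl; exacts [haρ, hbρ]
    have hpq2 : (ρ \ {a, b}).card = 2 := by
      rw [Finset.card_sdiff_of_subset habsub, ball_card4 hB ρ hρB, card2_of hab]
    obtain ⟨p, q, hpq, hpqeq⟩ := Finset.card_eq_two.mp hpq2
    have hpmem : p ∈ ρ \ {a, b} := by rw [hpqeq]; simp
    have hqmem : q ∈ ρ \ {a, b} := by rw [hpqeq]; simp
    rw [Finset.mem_sdiff] at hpmem hqmem
    obtain ⟨hpρ, hpab⟩ := hpmem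
    obtain ⟨hqρ, hqab⟩ := hqmem
    simp at hpab hqab
    obtain ⟨hpa, hpb⟩ := hpab
    obtain ⟨hqa, hqb⟩ := hqab
    have hMne2 : ∀ y, y ∈ ρ → y ≠ a → y ≠ b →
        ∃ ν, (ν ∈ B.filter (fun ρ' => a ∈ ρ' ∧ b ∈ ρ' ∧ ρ' ≠ σ0 ∧
          ρ' ≠ ({a, b, d, x} : Finset (Fin n))) ∧ ν ≠ ρ ∧ (ν ∩ ρ).card = 3) ∧
          ({a, b, y} : Finset (Fin n)) ⊆ ν := by
      intro y hyρ hya hyb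
      have hyc : y ≠ c := by
        intro hyy
        apply hρσ0
        have hm : ρ ∈ B.filter fun τ => ({a, b, c} : Finset (Fin n)) ⊆ τ := by
          refine Finset.mem_filter.2 ⟨hρB, ?_⟩
          intro z hz
          simp at hz
          rcases hz with h2 | h2 | h2
          · rw [h2]; exact haρ
          · rw [h2]; exact hbρ
          · rw [h2, ← hyy]; exact hyρ
        rw [hσ0eq] at hm
        exact Finset.mem_singleton.mp hm
      have hyd : y ≠ d := by
        intro hyy
        apply hρτ0
        have hm : ρ ∈ B.filter fun τ => ({a, b, d} : Finset (Fin n)) ⊆ τ := by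
          refine Finset.mem_filter.2 ⟨hρB, ?_⟩
          intro z hz
          simp at hz
          rcases hz with h2 | h2 | h2
          · rw [h2]; exact haρ
          · rw [h2]; exact hbρ
          · rw [h2, ← hyy]; exact hyρ
        rw [hconAbd] at hm
        exact Finset.mem_singleton.mp hm
      have hyx : y ≠ x := by
        intro hyy
        have hm : ρ ∈ B.filter fun τ => ({a, b, x} : Finset (Fin n)) ⊆ τ := by
          refine Finset.mem_filter.2 ⟨hρB, ?_⟩
          intro z hz
          simp at hz
          rcases hz with h2 | h2 | h2
          · rw [h2]; exact haρ
          · rw [h2]; exact hbρ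
          · rw [h2, ← hyy]; exact hyρ
        rw [hconAbx] at hm
        simp at hm
        rcases hm with h | h
        exacts [hρσ0 h, hρτ0 h]
      have hg3 : ({a, b, y} : Finset (Fin n)).card = 3 :=
        card3_of hab (Ne.symm hya) (Ne.symm hyb)
      have hgρ : ({a, b, y} : Finset (Fin n)) ⊆ ρ := by
        intro z hz; simp at hz; rcases hz with rfl | rfl | rfl; exacts [haρ, hbρ, hyρ]
      have hgnb : ({a, b, y} : Finset (Fin n)) ∉ bdry B := by
        intro hgb
        have hgS : ({a, b, y} : Finset (Fin n)) ∈ S.faces := by rw [hbS]; exact hgb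
        rcases habfaces _ hgS (by simp) (by simp) with h | h
        · have : y ∈ ({a, b, c} : Finset (Fin n)) := by rw [← h]; simp
          simp at this
          rcases this with h' | h' | h'
          exacts [hya h', hyb h', hyc h']
        · have : y ∈ ({a, b, d} : Finset (Fin n)) := by rw [← h]; simp
          simp at this
          rcases this with h' | h' | h'
          exacts [hya h', hyb h', hyd h']
      obtain ⟨ν, hνB, hνρ, hgν⟩ := second_container hB hg3 hρB hgρ hgnb
      refine ⟨ν, ⟨?_, hνρ, inter_card_three (ball_card4 hB ν hνB)
        (ball_card4 hB ρ hρB) hνρ hg3 hgν hgρ⟩, hgν⟩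
      rw [Finset.mem_filter]
      refine ⟨hνB, hgν (by simp), hgν (by simp), ?_, ?_⟩
      · intro h
        have : y ∈ σ0 := by rw [← h]; exact hgν (by simp)
        rw [hσ0eq4] at this
        simp at this
        rcases this with h' | h' | h' | h'
        exacts [hya h', hyb h', hyc h', hyx h']
      · intro h
        have : y ∈ ({a, b, d, x} : Finset (Fin n)) := by rw [← h]; exact hgν (by simp)
        simp at this
        rcases this with h' | h' | h' | h'
        exacts [hya h', hyb h', hyd h', hyx h']
    obtain ⟨ν1, hν1, hgν1⟩ := hMne2 p hpρ hpa hpb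
    obtain ⟨ν2, hν2, hgν2⟩ := hMne2 q hqρ hqa hqb
    have hν12 : ν1 ≠ ν2 := by
      intro h
      have hρeq : ({a, b} : Finset (Fin n)) ∪ {p, q} = ρ := by
        have hu := Finset.union_sdiff_of_subset habsub
        rw [hpqeq] at hu
        exact hu
      have hρsub : ρ ⊆ ν1 := by
        rw [← hρeq]
        intro y hy
        rcases Finset.mem_union.mp hy with hy | hy
        · apply hgν1
          simp at hy ⊢
          tauto
        · rcases Finset.mem_insert.mp hy with h2 | h2
          · exact hgν1 (by rw [h2]; simp)
          · rw [h]
            exact hgν2 (by rw [Finset.mem_singleton.mp h2]; simp)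
      have : ρ = ν1 := Finset.eq_of_subset_of_card_le hρsub
        (by rw [ball_card4 hB ν1 (Finset.mem_of_mem_filter _ hν1.1),
          ball_card4 hB ρ hρB])
      exact hν1.2.1 this.symm
    have hsubM : ({ν1, ν2} : Finset (Finset (Fin n)))
        ⊆ (B.filter (fun ρ' => a ∈ ρ' ∧ b ∈ ρ' ∧ ρ' ≠ σ0 ∧
          ρ' ≠ ({a, b, d, x} : Finset (Fin n)))).filter
            fun μ => μ ≠ ρ ∧ (μ ∩ ρ).card = 3 := by
      intro μ hμ
      rcases Finset.mem_insert.mp hμ with rfl | hμ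
      · exact Finset.mem_filter.2 ⟨hν1.1, hν1.2.1, hν1.2.2⟩
      · rw [Finset.mem_singleton] at hμ; subst hμ
        exact Finset.mem_filter.2 ⟨hν2.1, hν2.2.1, hν2.2.2⟩
    have hc2 : ({ν1, ν2} : Finset (Finset (Fin n))).card = 2 := by
      rw [Finset.card_insert_of_notMem (by simp [hν12]), Finset.card_singleton]
    have := Finset.card_le_card hsubM
    omega
  intro σ hσB hdeg
  have hchar := (deg4_iff hB hσB).mp hdeg
  have hnab : ¬(a ∈ σ ∧ b ∈ σ) := by
    rintro ⟨haσ, hbσ⟩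
    rcases habA σ hσB haσ hbσ with rfl | rfl
    · exact hchar {a, b, c} hσ0sub h3abc habc_b
    · exact hchar {a, b, d} (by intro y hy; simp at hy ⊢; tauto)
        (S.card_three _ habd) habd_b
  have hσB' : σ ∈ B' := hBtoB' σ hσB hnab
  refine ⟨hσB', ?_⟩
  rw [deg4_iff hB' hσB']
  intro f hfσ hf3 hfb'
  have hfT : f ∈ T.faces := by rw [hbT]; exact hfb'
  rcases (hTmem f).mp hfT with ⟨hfS, -, -⟩ | rfl | rfl
  · exact hchar f hfσ hf3 (by rw [← hbS]; exact hfS)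
  · exact hnocd σ hσB ⟨hfσ (by simp), hfσ (by simp)⟩
  · exact hnocd σ hσB ⟨hfσ (by simp), hfσ (by simp)⟩

lemma flip_symm {S T : Sphere2 n} {a b c d : Fin n} (hf : IsFlipOf S T a b c d) :
    IsFlipOf T S c d a b := by
  obtain ⟨hcd, habc, habd, hnedge, hTf⟩ := hf
  obtain ⟨hab, hac, hbc⟩ := card3_ne (S.card_three _ habc)
  obtain ⟨-, had, hbd⟩ := card3_ne (S.card_three _ habd)
  have hTmem := flip_mem_faces hTf
  have hacdS : ({a, c, d} : Finset (Fin n)) ∉ S.faces := by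
    intro h
    refine hnedge ⟨hcd, ?_⟩
    rw [Sphere2.edges, Finset.mem_biUnion]
    exact ⟨{a, c, d}, h, Finset.mem_powersetCard.2
      ⟨by intro y hy; simp at hy ⊢; tauto, card2_of hcd⟩⟩
  have hbcdS : ({b, c, d} : Finset (Fin n)) ∉ S.faces := by
    intro h
    refine hnedge ⟨hcd, ?_⟩
    rw [Sphere2.edges, Finset.mem_biUnion]
    exact ⟨{b, c, d}, h, Finset.mem_powersetCard.2
      ⟨by intro y hy; simp at hy ⊢; tauto, card2_of hcd⟩⟩
  have e1 : ({c, d, a} : Finset (Fin n)) = {a, c, d} := by ext y; simp; tauto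
  have e2 : ({c, d, b} : Finset (Fin n)) = {b, c, d} := by ext y; simp; tauto
  have e3 : ({c, a, b} : Finset (Fin n)) = {a, b, c} := by ext y; simp; tauto
  have e4 : ({d, a, b} : Finset (Fin n)) = {a, b, d} := by ext y; simp; tauto
  refine ⟨hab, ?_, ?_, ?_, ?_⟩
  · exact (hTmem _).mpr (Or.inr (Or.inl e1))
  · exact (hTmem _).mpr (Or.inr (Or.inr e2))
  · rintro ⟨-, habE⟩
    rw [Sphere2.edges, Finset.mem_biUnion] at habE
    obtain ⟨f, hfT, habf⟩ := habE
    rw [Finset.mem_powersetCard] at habf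
    have haf : a ∈ f := habf.1 (by simp)
    have hbf : b ∈ f := habf.1 (by simp)
    rcases (hTmem f).mp hfT with ⟨hfS, h1, h2⟩ | rfl | rfl
    · rcases ab_faces habc habd hcd f hfS haf hbf with h | h
      exacts [h1 h, h2 h]
    · simp at hbf
      rcases hbf with h | h | h
      exacts [hab h.symm, hbc h, hbd h]
    · simp at haf
      rcases haf with h | h | h
      exacts [hab h, hac h, had h]
  · have hrw : flipFaces T.faces c d a b
        = (T.faces \ {({a, c, d} : Finset (Fin n)), {b, c, d}})
          ∪ {({a, b, c} : Finset (Fin n)), {a, b, d}} := by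
      rw [flipFaces, e1, e2, e3, e4]
    rw [hrw]
    ext f
    simp only [Finset.mem_union, Finset.mem_sdiff, Finset.mem_insert,
      Finset.mem_singleton, hTmem f]
    constructor
    · intro hfS
      by_cases h1 : f = {a, b, c}
      · exact Or.inr (Or.inl h1)
      by_cases h2 : f = {a, b, d}
      · exact Or.inr (Or.inr h2)
      refine Or.inl ⟨Or.inl ⟨hfS, h1, h2⟩, ?_⟩
      rintro (h | h)
      · rw [h] at hfS; exact hacdS hfS
      · rw [h] at hfS; exact hbcdS hfS
    · rintro (⟨h, hne⟩ | rfl | rfl)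
      · rcases h with ⟨hfS, -, -⟩ | rfl | rfl
        · exact hfS
        · exact absurd (Or.inl rfl) hne
        · exact absurd (Or.inr rfl) hne
      · exact habc
      · exact habd

/-- If a stacked 2-sphere `T` is obtained from a stacked
2-sphere `S` by a single edge flip, then the subgraphs of the dual trees
`Λ(S̄)` and `Λ(T̄)` induced on their degree-four nodes are isomorphic. -/
theorem flip_preserves_deg4_subgraph (n : ℕ) (S T : Sphere2 n)
    (hS : IsStacked S) (hT : IsStacked T) (hflip : Flip S T)
    (B B' : Finset (Finset (Fin n)))
    (hB : IsStackedBall B) (hbS : S.faces = bdry B)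
    (hB' : IsStackedBall B') (hbT : T.faces = bdry B') :
    ∃ φ : {σ : Finset (Fin n) // σ ∈ B ∧ dualDeg B σ = 4} ≃
          {σ : Finset (Fin n) // σ ∈ B' ∧ dualDeg B' σ = 4},
      ∀ σ τ : {σ : Finset (Fin n) // σ ∈ B ∧ dualDeg B σ = 4},
        (σ.1 ≠ τ.1 ∧ (σ.1 ∩ τ.1).card = 3) ↔
          ((φ σ).1 ≠ (φ τ).1 ∧ ((φ σ).1 ∩ (φ τ).1).card = 3) := by
  obtain ⟨a, b, c, d, hIF⟩ := hflip
  have h1 := main_side S T a b c d hIF B B' hB hbS hB' hbT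
  have h2 := main_side T S c d a b (flip_symm hIF) B' B hB' hbT hB hbS
  have hiff : ∀ σ : Finset (Fin n),
      (σ ∈ B ∧ dualDeg B σ = 4) ↔ (σ ∈ B' ∧ dualDeg B' σ = 4) := by
    intro σ
    constructor
    · rintro ⟨h, h4⟩; exact h1 σ h h4
    · rintro ⟨h, h4⟩; exact h2 σ h h4
  exact ⟨⟨fun σ => ⟨σ.1, (hiff σ.1).mp σ.2⟩, fun σ => ⟨σ.1, (hiff σ.1).mpr σ.2⟩,
    fun σ => rfl, fun σ => rfl⟩, fun σ τ => Iff.rfl⟩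

end PachnerSpheres
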